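/- Let H_t = P(q ≤ t | T₁,...,T_n) where q = (Σ_{i=1}^n 1{T_i < T'} + U)/(n+1) with T', U ~ Uniform[0,1] independent of T₁,...,T_n. Writing a = (n+1)t, k = ⌊a⌋, γ = a − k, we have H_t = Σ_{ℓ=0}^{k-1} D_ℓ + γ·D_k, where D₀,...,D_n are the uniform spacings of T₁,...,T_n. -/

import Mathlib

open MeasureTheory

/-- The `k`-th order statistic (`1 ≤ k ≤ n`) of `v`, extended by `0` at `k = 0` and by
`1` for `k > n`. -/
noncomputable def ordStatExt (n : ℕ) (v : Fin n → ℝ) (k : ℕ) : ℝ :=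
  if k = 0 then 0
  else if n < k then 1
  else sInf {x : ℝ | k ≤ (Finset.univ.filter (fun i => v i ≤ x)).card}

/-- The uniform spacings: `D_0 = v_(1)`, `D_ℓ = v_(ℓ+1) - v_(ℓ)`, `D_n = 1 - v_(n)`. -/
noncomputable def spacing (n : ℕ) (v : Fin n → ℝ) (ℓ : ℕ) : ℝ :=
  ordStatExt n v (ℓ + 1) - ordStatExt n v ℓ


section det
variable {n : ℕ} (v : Fin n → ℝ)

private noncomputable def cnt (c : ℝ) : ℕ := (Finset.univ.filter (fun i => v i ≤ c)).card

private lemma cnt_mono {c d : ℝ} (h : c ≤ d) : cnt v c ≤ cnt v d := by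
  apply Finset.card_le_card
  intro i hi
  simp only [Finset.mem_filter, Finset.mem_univ, true_and] at *
  linarith

private lemma ordStat_attain {k : ℕ} (hk1 : 1 ≤ k) (hkn : k ≤ n) :
    k ≤ cnt v (ordStatExt n v k) := by
  have hn : 0 < n := lt_of_lt_of_le hk1 hkn
  haveI : Nonempty (Fin n) := ⟨⟨0, hn⟩⟩
  have hne : (Finset.univ : Finset (Fin n)).Nonempty := Finset.univ_nonempty
  set S : Set ℝ := {x : ℝ | k ≤ (Finset.univ.filter (fun i => v i ≤ x)).card} with hS
  have hmem : Finset.univ.sup' hne v ∈ S := by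
    have : Finset.univ.filter (fun i => v i ≤ Finset.univ.sup' hne v) = Finset.univ := by
      apply Finset.filter_true_of_mem
      intro i _
      exact Finset.le_sup' v (Finset.mem_univ i)
    simp only [hS, Set.mem_setOf_eq, this, Finset.card_univ, Fintype.card_fin]
    exact hkn
  have hSne : S.Nonempty := ⟨_, hmem⟩
  have hbdd : BddBelow S := by
    refine ⟨Finset.univ.inf' hne v, fun x hx => ?_⟩
    simp only [hS, Set.mem_setOf_eq] at hx
    have hpos : 0 < (Finset.univ.filter (fun i => v i ≤ x)).card := lt_of_lt_of_le hk1 hx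
    obtain ⟨i, hi⟩ := Finset.card_pos.mp hpos
    simp only [Finset.mem_filter, Finset.mem_univ, true_and] at hi
    exact le_trans (Finset.inf'_le v (Finset.mem_univ i)) hi
  have hord : ordStatExt n v k = sInf S := by
    simp only [ordStatExt, hS]
    rw [if_neg (by omega), if_neg (by omega)]
  rw [hord]
  set b := sInf S with hb
  rcases (Finset.univ.filter (fun i => b < v i)).eq_empty_or_nonempty with hF | hF
  · have : Finset.univ.filter (fun i => v i ≤ b) = Finset.univ := by
      apply Finset.filter_true_of_mem
      intro i _
      by_contra h
      have : i ∈ Finset.univ.filter (fun i => b < v i) := by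
        simp only [Finset.mem_filter, Finset.mem_univ, true_and]
        linarith
      simp [hF] at this
    simp only [cnt, this, Finset.card_univ, Fintype.card_fin]
    exact hkn
  · set ε := (Finset.univ.filter (fun i => b < v i)).inf' hF (fun i => v i - b) with hε
    have hεpos : 0 < ε := by
      rw [hε]
      rw [Finset.lt_inf'_iff]
      intro i hi
      simp only [Finset.mem_filter, Finset.mem_univ, true_and] at hi
      linarith
    obtain ⟨x, hxS, hxlt⟩ := exists_lt_of_csInf_lt hSne (show sInf S < b + ε by rw [← hb]; linarith)
    refine le_trans hxS (Finset.card_le_card ?_)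
    intro i hi
    simp only [Finset.mem_filter, Finset.mem_univ, true_and] at *
    by_contra h
    push_neg at h
    have hiF : i ∈ Finset.univ.filter (fun i => b < v i) := by
      simp only [Finset.mem_filter, Finset.mem_univ, true_and]
      exact h
    have : ε ≤ v i - b := Finset.inf'_le _ hiF
    have hbx : b ≤ x := csInf_le hbdd hxS
    linarith

private lemma ordStat_le_iff {k : ℕ} (hk1 : 1 ≤ k) (hkn : k ≤ n) {c : ℝ} :
    ordStatExt n v k ≤ c ↔ k ≤ cnt v c := by
  have hn : 0 < n := lt_of_lt_of_le hk1 hkn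
  haveI : Nonempty (Fin n) := ⟨⟨0, hn⟩⟩
  have hne : (Finset.univ : Finset (Fin n)).Nonempty := Finset.univ_nonempty
  have hord : ordStatExt n v k =
      sInf {x : ℝ | k ≤ (Finset.univ.filter (fun i => v i ≤ x)).card} := by
    simp only [ordStatExt]
    rw [if_neg (by omega), if_neg (by omega)]
  have hbdd : BddBelow {x : ℝ | k ≤ (Finset.univ.filter (fun i => v i ≤ x)).card} := by
    refine ⟨Finset.univ.inf' hne v, fun x hx => ?_⟩
    simp only [Set.mem_setOf_eq] at hx
    have hpos : 0 < (Finset.univ.filter (fun i => v i ≤ x)).card := lt_of_lt_of_le hk1 hx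
    obtain ⟨i, hi⟩ := Finset.card_pos.mp hpos
    simp only [Finset.mem_filter, Finset.mem_univ, true_and] at hi
    exact le_trans (Finset.inf'_le v (Finset.mem_univ i)) hi
  constructor
  · intro h
    exact le_trans (ordStat_attain v hk1 hkn) (cnt_mono v h)
  · intro h
    rw [hord]
    exact csInf_le hbdd h


private lemma ordStat_zero : ordStatExt n v 0 = 0 := by simp [ordStatExt]

private lemma ordStat_top {m : ℕ} (h : n < m) : ordStatExt n v m = 1 := by
  simp only [ordStatExt]
  rw [if_neg (by omega), if_pos h]

private lemma ordStat_step (hgood : ∀ i, v i ∈ Set.Icc (0:ℝ) 1) {m : ℕ} (hm : m ≤ n) :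
    ordStatExt n v m ≤ ordStatExt n v (m + 1) := by
  rcases Nat.eq_zero_or_pos m with rfl | hm1
  · rw [ordStat_zero]
    rcases Nat.eq_zero_or_pos n with rfl | hn
    · rw [ordStat_top v (by omega)]; norm_num
    · by_contra h
      push_neg at h
      have h1 : 1 ≤ cnt v (ordStatExt n v 1) := ordStat_attain v le_rfl hn
      obtain ⟨i, hi⟩ := Finset.card_pos.mp (lt_of_lt_of_le one_pos h1)
      simp only [Finset.mem_filter, Finset.mem_univ, true_and] at hi
      have := (hgood i).1
      linarith
  · rcases eq_or_lt_of_le hm with heq | hlt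
    · have h1 : ordStatExt n v (m + 1) = 1 := ordStat_top v (by omega)
      rw [h1, ordStat_le_iff v hm1 hm]
      have : Finset.univ.filter (fun i => v i ≤ (1:ℝ)) = Finset.univ :=
        Finset.filter_true_of_mem (fun i _ => (hgood i).2)
      simp only [cnt, this, Finset.card_univ, Fintype.card_fin]
      exact hm
    · rw [ordStat_le_iff v hm1 hm]
      exact le_trans (Nat.le_succ m) (ordStat_attain v (by omega) hlt)

private lemma ordStat_mono (hgood : ∀ i, v i ∈ Set.Icc (0:ℝ) 1) :
    ∀ j ≤ n + 1, ∀ i ≤ j, ordStatExt n v i ≤ ordStatExt n v j := by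
  intro j
  induction j with
  | zero =>
    intro _ i hi
    have : i = 0 := by omega
    subst this
    exact le_rfl
  | succ j ih =>
    intro hj i hi
    rcases eq_or_lt_of_le hi with rfl | hlt
    · exact le_rfl
    · exact le_trans (ih (by omega) i (by omega)) (ordStat_step v hgood (by omega))

private lemma spacing_nonneg (hgood : ∀ i, v i ∈ Set.Icc (0:ℝ) 1) {m : ℕ} (hm : m ≤ n) :
    0 ≤ spacing n v m := sub_nonneg.mpr (ordStat_step v hgood hm)

private lemma card_count {m : ℕ} (hm : m ≤ n) {s : ℝ}
    (hs : s ∈ Set.Ioo (ordStatExt n v m) (ordStatExt n v (m + 1))) :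
    (Finset.univ.filter (fun i => v i < s)).card = m := by
  obtain ⟨hs1, hs2⟩ := hs
  apply le_antisymm
  · by_contra h
    push_neg at h
    rcases eq_or_lt_of_le hm with heq | hlt
    · have : (Finset.univ.filter (fun i => v i < s)).card ≤ n := by
        calc (Finset.univ.filter (fun i => v i < s)).card ≤ (Finset.univ : Finset (Fin n)).card :=
          Finset.card_le_card (Finset.filter_subset _ _)
        _ = n := by simp
      omega
    · have hFne : (Finset.univ.filter (fun i => v i < s)).Nonempty :=
        Finset.card_pos.mp (by omega)
      set c := (Finset.univ.filter (fun i => v i < s)).sup' hFne v with hc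
      have hcs : c < s := by
        rw [hc, Finset.sup'_lt_iff]
        intro i hi
        simp only [Finset.mem_filter, Finset.mem_univ, true_and] at hi
        exact hi
      have hcnt : m + 1 ≤ cnt v c := by
        refine le_trans h (Finset.card_le_card ?_)
        intro i hi
        simp only [Finset.mem_filter, Finset.mem_univ, true_and] at *
        exact Finset.le_sup' v (by simp only [Finset.mem_filter, Finset.mem_univ, true_and]; exact hi)
      have := (ordStat_le_iff v (by omega) hlt).mpr hcnt
      linarith
  · rcases Nat.eq_zero_or_pos m with rfl | hm1
    · exact Nat.zero_le _
    · refine le_trans (ordStat_attain v hm1 hm) (Finset.card_le_card ?_)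
      intro i hi
      simp only [Finset.mem_filter, Finset.mem_univ, true_and] at *
      linarith

end det

private lemma ofReal_max_zero (x : ℝ) : ENNReal.ofReal (max 0 x) = ENNReal.ofReal x := by
  rcases le_total x 0 with h | h
  · rw [max_eq_left h, ENNReal.ofReal_of_nonpos h, ENNReal.ofReal_zero]
  · rw [max_eq_right h]

private lemma core_integral (n : ℕ) (t : ℝ) (ht : t ∈ Set.Ioo (0:ℝ) 1) (v : Fin n → ℝ)
    (hgood : ∀ i, v i ∈ Set.Icc (0:ℝ) 1) :
    ((volume.restrict (Set.Icc (0:ℝ) 1)).prod (volume.restrict (Set.Icc (0:ℝ) 1)))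
      {p : ℝ × ℝ | ((((Finset.univ.filter (fun i : Fin n => v i < p.1)).card : ℝ) + p.2)
        / (n + 1)) ≤ t}
    = ENNReal.ofReal (∑ ℓ ∈ Finset.range ⌊(n + 1 : ℝ) * t⌋₊, spacing n v ℓ +
        ((n + 1 : ℝ) * t - ⌊(n + 1 : ℝ) * t⌋₊) * spacing n v ⌊(n + 1 : ℝ) * t⌋₊) := by
  classical
  set ν := volume.restrict (Set.Icc (0:ℝ) 1) with hν
  set a := (n + 1 : ℝ) * t with ha
  set k := ⌊a⌋₊ with hk
  have ha0 : 0 < a := by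
    rw [ha]; have := ht.1; positivity
  have han : a < n + 1 := by
    rw [ha]
    calc (n + 1 : ℝ) * t < (n + 1 : ℝ) * 1 := by
          apply mul_lt_mul_of_pos_left ht.2; positivity
      _ = n + 1 := mul_one _
  have hkn : k ≤ n := by
    have : k < n + 1 := by
      rw [hk, Nat.floor_lt ha0.le]
      exact_mod_cast han
    omega
  have hγ0 : 0 ≤ a - k := sub_nonneg.mpr (Nat.floor_le ha0.le)
  have hγ1 : a - k < 1 := by
    have := Nat.lt_floor_add_one a
    rw [← hk] at this
    linarith
  -- measurability of counting function
  have hNmeas : Measurable (fun s : ℝ => ((Finset.univ.filter (fun i : Fin n => v i < s)).card : ℝ)) := by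
    have : (fun s : ℝ => ((Finset.univ.filter (fun i : Fin n => v i < s)).card : ℝ))
        = fun s => ∑ i : Fin n, if v i < s then (1:ℝ) else 0 := by
      funext s
      rw [Finset.card_filter]
      push_cast
      rfl
    rw [this]
    exact Finset.measurable_sum _ (fun i _ =>
      Measurable.ite (measurableSet_lt measurable_const measurable_id) measurable_const
        measurable_const)
  have hAmeas : MeasurableSet {p : ℝ × ℝ |
      ((((Finset.univ.filter (fun i : Fin n => v i < p.1)).card : ℝ) + p.2) / (n + 1)) ≤ t} := by
    apply measurableSet_le _ measurable_const
    exact ((hNmeas.comp measurable_fst).add measurable_snd).div_const _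
  rw [Measure.prod_apply hAmeas]
  -- slices
  have hslice : ∀ s : ℝ,
      (Prod.mk s ⁻¹' {p : ℝ × ℝ |
        ((((Finset.univ.filter (fun i : Fin n => v i < p.1)).card : ℝ) + p.2) / (n + 1)) ≤ t})
      = Set.Iic (a - ((Finset.univ.filter (fun i : Fin n => v i < s)).card : ℝ)) := by
    intro s
    ext u
    simp only [Set.mem_preimage, Set.mem_setOf_eq, Set.mem_Iic]
    rw [div_le_iff₀ (by positivity : (0:ℝ) < (n:ℝ) + 1)]
    constructor <;> intro h <;> [skip; skip] <;> nlinarith [h]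
  have hν_Iic : ∀ c : ℝ, ν (Set.Iic c) = ENNReal.ofReal (min 1 c) := by
    intro c
    rw [hν, Measure.restrict_apply measurableSet_Iic]
    have : Set.Iic c ∩ Set.Icc (0:ℝ) 1 = Set.Icc 0 (min c 1) := by
      ext x
      simp only [Set.mem_inter_iff, Set.mem_Iic, Set.mem_Icc, le_min_iff]
      tauto
    rw [this, Real.volume_Icc, min_comm]
    norm_num
  have hint : (fun s => ν (Prod.mk s ⁻¹' {p : ℝ × ℝ |
        ((((Finset.univ.filter (fun i : Fin n => v i < p.1)).card : ℝ) + p.2) / (n + 1)) ≤ t}))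
      = fun s => ENNReal.ofReal
          (min 1 (a - ((Finset.univ.filter (fun i : Fin n => v i < s)).card : ℝ))) := by
    funext s
    rw [hslice s, hν_Iic]
  rw [hint]
  -- decompose [0,1] into spacing intervals
  set e : ℕ → ℝ := fun m => ordStatExt n v m with he
  have hmono := ordStat_mono v hgood
  have he0 : e 0 = 0 := ordStat_zero v
  have hetop : e (n + 1) = 1 := ordStat_top v (by omega)
  set U := ⋃ m ∈ Finset.range (n + 1), Set.Ioo (e m) (e (m + 1)) with hU
  have hUsub : U ⊆ Set.Icc (0:ℝ) 1 := by
    intro x hx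
    rw [hU] at hx
    simp only [Set.mem_iUnion, Finset.mem_range] at hx
    obtain ⟨m, hm, hx1, hx2⟩ := hx
    constructor
    · calc (0:ℝ) = e 0 := he0.symm
        _ ≤ e m := hmono m (by omega) 0 (by omega)
        _ ≤ x := hx1.le
    · calc x ≤ e (m + 1) := hx2.le
        _ ≤ e (n + 1) := hmono (n + 1) le_rfl (m + 1) (by omega)
        _ = 1 := hetop
  have hnull : volume (Set.Icc (0:ℝ) 1 \ U) = 0 := by
    have hfin : volume (⋃ m ∈ Finset.range (n + 2), ({e m} : Set ℝ)) = 0 :=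
      Set.Finite.measure_zero
        (Set.Finite.biUnion (Finset.finite_toSet _) (fun m _ => Set.finite_singleton _)) _
    apply measure_mono_null _ hfin
    intro x ⟨hx, hxU⟩
    by_contra hne
    simp only [Set.mem_iUnion, Finset.mem_range, Set.mem_singleton_iff, not_exists] at hne
    push_neg at hne
    set M := Nat.findGreatest (fun m => e m ≤ x) (n + 1) with hM
    have hMle : M ≤ n + 1 := Nat.findGreatest_le _
    have hP0 : e 0 ≤ x := by rw [he0]; exact hx.1
    have hMspec : e M ≤ x := Nat.findGreatest_spec (P := fun m => e m ≤ x) (Nat.zero_le _) hP0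
    have hMlt : e M < x := lt_of_le_of_ne hMspec (fun h => hne M (by omega) h.symm)
    have hMn : M ≠ n + 1 := by
      intro h
      rw [h, hetop] at hMlt
      exact absurd hx.2 (not_le.mpr hMlt)
    have hnext : ¬ e (M + 1) ≤ x :=
      Nat.findGreatest_is_greatest (P := fun m => e m ≤ x) (n := n + 1) (k := M + 1)
        (Nat.lt_succ_self _) (by omega)
    push_neg at hnext
    apply hxU
    rw [hU]
    simp only [Set.mem_iUnion, Finset.mem_range]
    exact ⟨M, by omega, hMlt, hnext⟩
  have hrestr : ν = volume.restrict U := by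
    rw [hν]
    apply Measure.restrict_congr_set
    rw [ae_eq_set]
    constructor
    · exact hnull
    · simp [Set.diff_eq_empty.mpr hUsub]
  rw [hrestr]
  have hdisj : Set.PairwiseDisjoint (↑(Finset.range (n + 1)))
      (fun m => Set.Ioo (e m) (e (m + 1))) := by
    have key : ∀ {i j : ℕ}, i < j → j ≤ n →
        Disjoint (Set.Ioo (e i) (e (i + 1))) (Set.Ioo (e j) (e (j + 1))) := by
      intro i j hij hj
      rw [Set.disjoint_left]
      intro x hx1 hx2
      have h1 : e (i + 1) ≤ e j := hmono j (by omega) (i + 1) (by omega)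
      have := hx1.2
      have := hx2.1
      linarith
    intro i hi j hj hij
    simp only [Finset.coe_range, Set.mem_Iio] at hi hj
    rcases lt_or_gt_of_ne hij with h | h
    · exact key h (by omega)
    · exact (key h (by omega)).symm
  rw [hU, lintegral_biUnion_finset hdisj (fun m _ => measurableSet_Ioo)]
  have hpiece : ∀ m ∈ Finset.range (n + 1),
      ∫⁻ s in Set.Ioo (e m) (e (m + 1)),
        ENNReal.ofReal (min 1 (a - ((Finset.univ.filter (fun i : Fin n => v i < s)).card : ℝ)))
        ∂volume
      = ENNReal.ofReal (max 0 (min 1 (a - (m : ℝ))) * spacing n v m) := by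
    intro m hm
    rw [Finset.mem_range] at hm
    rw [setLIntegral_congr_fun measurableSet_Ioo (
      (fun s hs => by rw [card_count v (by omega : m ≤ n) hs]))]
    rw [setLIntegral_const, Real.volume_Ioo]
    rw [← ofReal_max_zero (min 1 (a - (m : ℝ))), ← ENNReal.ofReal_mul (le_max_left _ _)]
    rfl
  rw [Finset.sum_congr rfl hpiece]
  rw [← ENNReal.ofReal_sum_of_nonneg (fun m hm => mul_nonneg (le_max_left _ _)
    (spacing_nonneg v hgood (by rw [Finset.mem_range] at hm; omega)))]
  congr 1
  -- real identity
  have hsplit : Finset.range (n + 1) = Finset.range (k + 1) ∪ Finset.Ico (k + 1) (n + 1) := by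
    ext m
    simp only [Finset.mem_range, Finset.mem_union, Finset.mem_Ico]
    omega
  rw [hsplit, Finset.sum_union (by
    rw [Finset.range_eq_Ico]
    exact Finset.Ico_disjoint_Ico_consecutive 0 (k + 1) (n + 1))]
  have hzero : ∑ m ∈ Finset.Ico (k + 1) (n + 1), max 0 (min 1 (a - (m : ℝ))) * spacing n v m
      = 0 := by
    apply Finset.sum_eq_zero
    intro m hm
    rw [Finset.mem_Ico] at hm
    have hma : a - (m : ℝ) ≤ 0 := by
      have : (k : ℝ) + 1 ≤ (m : ℝ) := by exact_mod_cast hm.1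
      linarith
    rw [min_eq_right (by linarith), max_eq_left hma, zero_mul]
  rw [hzero, add_zero, Finset.sum_range_succ]
  congr 1
  · apply Finset.sum_congr rfl
    intro m hm
    rw [Finset.mem_range] at hm
    have hm1 : (m : ℝ) + 1 ≤ (k : ℝ) := by exact_mod_cast hm
    rw [min_eq_left (by linarith), max_eq_right (by norm_num), one_mul]
  · rw [min_eq_right hγ1.le, max_eq_right hγ0]

section phi

private lemma unif_prob : IsProbabilityMeasure (volume.restrict (Set.Icc (0:ℝ) 1)) := by
  constructor
  rw [Measure.restrict_apply MeasurableSet.univ, Set.univ_inter, Real.volume_Icc]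
  norm_num

variable (n : ℕ)

private noncomputable def phi (p : (Fin n → ℝ) × ℝ × ℝ) : Fin (n + 2) → ℝ := fun j =>
  if h : (j : ℕ) < n then p.1 ⟨j, h⟩ else if (j : ℕ) = n then p.2.1 else p.2.2

private lemma phi_castLE (p : (Fin n → ℝ) × ℝ × ℝ) (i : Fin n) :
    phi n p (Fin.castLE (by omega : n ≤ n + 1 + 1) i) = p.1 i := by
  simp [phi]

private lemma phi_mid (p : (Fin n → ℝ) × ℝ × ℝ) :
    phi n p ⟨n, (by omega : n < n + 1 + 1)⟩ = p.2.1 := by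
  simp [phi]

private lemma phi_top (p : (Fin n → ℝ) × ℝ × ℝ) :
    phi n p ⟨n + 1, (by omega : n + 1 < n + 1 + 1)⟩ = p.2.2 := by
  simp [phi]

private lemma measurable_phi : Measurable (phi n) := by
  apply measurable_pi_lambda
  intro j
  by_cases h : (j : ℕ) < n
  · simp only [phi, dif_pos h]
    exact (measurable_pi_apply _).comp measurable_fst
  · by_cases h2 : (j : ℕ) = n
    · simp only [phi, dif_neg h, if_pos h2]
      exact measurable_fst.comp measurable_snd
    · simp only [phi, dif_neg h, if_neg h2]
      exact measurable_snd.comp measurable_snd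

private lemma phi_preimage_pi (s : Fin (n + 2) → Set ℝ) :
    phi n ⁻¹' (Set.pi Set.univ s)
      = (Set.pi Set.univ (fun i : Fin n => s (Fin.castLE (by omega : n ≤ n + 1 + 1) i))) ×ˢ
        (s ⟨n, (by omega : n < n + 1 + 1)⟩ ×ˢ s ⟨n + 1, (by omega : n + 1 < n + 1 + 1)⟩) := by
  ext p
  simp only [Set.mem_preimage, Set.mem_pi, Set.mem_univ, true_implies, Set.mem_prod]
  constructor
  · intro h
    refine ⟨fun i => ?_, ?_, ?_⟩
    · rw [← phi_castLE n p i]; exact h _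
    · rw [← phi_mid n p]; exact h _
    · rw [← phi_top n p]; exact h _
  · rintro ⟨h1, h2, h3⟩ ⟨j, hj⟩
    by_cases hc : j < n
    · have he : (⟨j, hj⟩ : Fin (n + 2)) = Fin.castLE (by omega : n ≤ n + 1 + 1) (⟨j, hc⟩ : Fin n) := rfl
      rw [he, phi_castLE]
      exact h1 _
    · by_cases hc2 : j = n
      · have he : (⟨j, hj⟩ : Fin (n + 2)) = ⟨n, (by omega : n < n + 1 + 1)⟩ := by simp [hc2]
        rw [he, phi_mid]
        exact h2
      · have he : (⟨j, hj⟩ : Fin (n + 2)) = ⟨n + 1, (by omega : n + 1 < n + 1 + 1)⟩ := by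
          have : j = n + 1 := by omega
          simp [this]
        rw [he, phi_top]
        exact h3

private lemma prod_split (g : Fin (n + 2) → ENNReal) :
    ∏ j, g j = (∏ i : Fin n, g (Fin.castLE (by omega : n ≤ n + 1 + 1) i)) *
      (g ⟨n, (by omega : n < n + 1 + 1)⟩ * g ⟨n + 1, (by omega : n + 1 < n + 1 + 1)⟩) := by
  rw [Fin.prod_univ_castSucc, Fin.prod_univ_castSucc, mul_assoc]
  congr 1

private lemma phi_map :
    ((Measure.pi fun _ : Fin n => volume.restrict (Set.Icc (0:ℝ) 1)).prod
        ((volume.restrict (Set.Icc (0:ℝ) 1)).prod (volume.restrict (Set.Icc (0:ℝ) 1)))).map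
        (phi n)
      = Measure.pi (fun _ : Fin (n + 2) => volume.restrict (Set.Icc (0:ℝ) 1)) := by
  haveI := unif_prob
  refine (Measure.pi_eq fun s hs => ?_).symm
  rw [Measure.map_apply (measurable_phi n) (MeasurableSet.univ_pi hs)]
  rw [phi_preimage_pi]
  rw [Measure.prod_prod, Measure.prod_prod, Measure.pi_pi]
  rw [prod_split n (fun j => volume.restrict (Set.Icc (0:ℝ) 1) (s j))]

end phi

private lemma measurable_ordStat (n k : ℕ) :
    Measurable (fun v : Fin n → ℝ => ordStatExt n v k) := by
  rcases Nat.eq_zero_or_pos k with rfl | hk1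
  · simp only [ordStatExt, if_pos rfl]
    exact measurable_const
  · rcases lt_or_ge n k with h | h
    · have he : (fun v : Fin n → ℝ => ordStatExt n v k) = fun _ => 1 :=
        funext fun v => ordStat_top v h
      rw [he]
      exact measurable_const
    · apply measurable_of_Iic
      intro c
      have he : (fun v : Fin n → ℝ => ordStatExt n v k) ⁻¹' (Set.Iic c)
          = {v : Fin n → ℝ | k ≤ (Finset.univ.filter (fun i => v i ≤ c)).card} := by
        ext v
        simp only [Set.mem_preimage, Set.mem_Iic, Set.mem_setOf_eq]
        exact ordStat_le_iff v hk1 h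
      rw [he]
      have hmc : Measurable (fun v : Fin n → ℝ => (Finset.univ.filter (fun i => v i ≤ c)).card) := by
        have he2 : (fun v : Fin n → ℝ => (Finset.univ.filter (fun i => v i ≤ c)).card)
            = fun v => ∑ i : Fin n, if v i ≤ c then 1 else 0 := by
          funext v; rw [Finset.card_filter]
        rw [he2]
        exact Finset.measurable_sum _ fun i _ =>
          Measurable.ite (measurableSet_le (measurable_pi_apply i) measurable_const)
            measurable_const measurable_const
      exact hmc measurableSet_Ici

private lemma measurable_spacing (n ℓ : ℕ) :
    Measurable (fun v : Fin n → ℝ => spacing n v ℓ) :=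
  (measurable_ordStat n (ℓ + 1)).sub (measurable_ordStat n ℓ)


/-- `H_t = P(q ≤ t | T₁,...,T_n) = Σ_{ℓ<k} D_ℓ + γ D_k`, where `k = ⌊(n+1)t⌋`,
`γ = (n+1)t - k`, and `D` are the uniform spacings of the calibration points. -/
theorem stmt_12 {Ω : Type*} [MeasurableSpace Ω] (μ : Measure Ω) [IsProbabilityMeasure μ]
    (n : ℕ) (X : Fin (n + 2) → Ω → ℝ) (hmeas : ∀ i, Measurable (X i))
    (hindep : ProbabilityTheory.iIndepFun X μ)
    (hunif : ∀ i, Measure.map (X i) μ = volume.restrict (Set.Icc (0:ℝ) 1))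
    (t : ℝ) (ht : t ∈ Set.Ioo (0:ℝ) 1) :
    ∀ᵐ ω ∂μ,
      (μ[Set.indicator {ω' | (((Finset.univ.filter (fun i : Fin n =>
            X (Fin.castLE (by omega) i) ω' < X ⟨n, by omega⟩ ω')).card : ℝ) +
            X ⟨n + 1, by omega⟩ ω') / (n + 1) ≤ t} (fun _ => (1:ℝ)) |
        MeasurableSpace.comap
          (fun ω' (i : Fin n) => X (Fin.castLE (by omega) i) ω') inferInstance]) ω =
      ∑ ℓ ∈ Finset.range ⌊(n + 1 : ℝ) * t⌋₊,
          spacing n (fun i => X (Fin.castLE (by omega) i) ω) ℓ +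
        ((n + 1 : ℝ) * t - ⌊(n + 1 : ℝ) * t⌋₊) *
          spacing n (fun i => X (Fin.castLE (by omega) i) ω) ⌊(n + 1 : ℝ) * t⌋₊ := by
  classical
  haveI : IsProbabilityMeasure (volume.restrict (Set.Icc (0:ℝ) 1)) := unif_prob
  -- basic facts about k and γ
  have ha0 : (0:ℝ) < (n + 1 : ℝ) * t := by have := ht.1; positivity
  have han : (n + 1 : ℝ) * t < n + 1 := by
    calc (n + 1 : ℝ) * t < (n + 1 : ℝ) * 1 := by
          apply mul_lt_mul_of_pos_left ht.2; positivity
      _ = n + 1 := mul_one _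
  have hkn : ⌊(n + 1 : ℝ) * t⌋₊ ≤ n := by
    have : ⌊(n + 1 : ℝ) * t⌋₊ < n + 1 := by
      rw [Nat.floor_lt ha0.le]
      exact_mod_cast han
    omega
  have hγ0 : (0:ℝ) ≤ (n + 1 : ℝ) * t - ⌊(n + 1 : ℝ) * t⌋₊ :=
    sub_nonneg.mpr (Nat.floor_le ha0.le)
  have hγ1 : (n + 1 : ℝ) * t - ⌊(n + 1 : ℝ) * t⌋₊ < 1 := by
    have := Nat.lt_floor_add_one ((n + 1 : ℝ) * t)
    linarith
  -- main objects
  set Y : Ω → (Fin n → ℝ) := fun ω' (i : Fin n) => X (Fin.castLE (by omega) i) ω' with hYdef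
  set A : Set Ω := {ω' | (((Finset.univ.filter (fun i : Fin n =>
      X (Fin.castLE (by omega) i) ω' < X ⟨n, by omega⟩ ω')).card : ℝ) +
      X ⟨n + 1, by omega⟩ ω') / (n + 1) ≤ t} with hAdef
  set G : (Fin n → ℝ) → ℝ := fun v =>
    ∑ ℓ ∈ Finset.range ⌊(n + 1 : ℝ) * t⌋₊, spacing n v ℓ +
      ((n + 1 : ℝ) * t - ⌊(n + 1 : ℝ) * t⌋₊) * spacing n v ⌊(n + 1 : ℝ) * t⌋₊ with hGdef
  have hYmeas : Measurable Y := measurable_pi_lambda _ fun i => hmeas _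
  have hm' : MeasurableSpace.comap Y inferInstance ≤ _ := hYmeas.comap_le
  have hGmeas : Measurable G := by
    rw [hGdef]
    exact (Finset.measurable_sum _ fun ℓ _ => measurable_spacing n ℓ).add
      (measurable_const.mul (measurable_spacing n _))
  have hA_meas : MeasurableSet A := by
    rw [hAdef]
    have hcard : Measurable (fun ω' : Ω => ((Finset.univ.filter (fun i : Fin n =>
        X (Fin.castLE (by omega) i) ω' < X ⟨n, by omega⟩ ω')).card : ℝ)) := by
      have he : (fun ω' : Ω => ((Finset.univ.filter (fun i : Fin n =>
          X (Fin.castLE (by omega) i) ω' < X ⟨n, by omega⟩ ω')).card : ℝ))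
          = fun ω' => ∑ i : Fin n, if X (Fin.castLE (by omega) i) ω' < X ⟨n, by omega⟩ ω'
              then (1:ℝ) else 0 := by
        funext ω'
        rw [Finset.card_filter]
        push_cast
        rfl
      rw [he]
      exact Finset.measurable_sum _ fun i _ =>
        Measurable.ite (measurableSet_lt (hmeas _) (hmeas _)) measurable_const measurable_const
    exact measurableSet_le ((hcard.add (hmeas _)).div_const _) measurable_const
  -- laws
  have hJmeas : Measurable (fun ω (j : Fin (n + 2)) => X j ω) :=
    measurable_pi_lambda _ fun j => hmeas j
  have hPmap : μ.map (fun ω (j : Fin (n + 2)) => X j ω)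
      = Measure.pi (fun _ : Fin (n + 2) => volume.restrict (Set.Icc (0:ℝ) 1)) := by
    refine (Measure.pi_eq fun s hs => ?_).symm
    rw [Measure.map_apply hJmeas (MeasurableSet.univ_pi hs)]
    have hpre : (fun ω (j : Fin (n + 2)) => X j ω) ⁻¹' (Set.pi Set.univ s)
        = ⋂ j ∈ (Finset.univ : Finset (Fin (n + 2))), X j ⁻¹' s j := by
      ext ω
      simp [Set.mem_pi]
    rw [hpre, hindep.measure_inter_preimage_eq_mul Finset.univ (fun j _ => hs j)]
    exact Finset.prod_congr rfl fun j _ => by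
      rw [← hunif j, Measure.map_apply (hmeas j) (hs j)]
  set π : (Fin (n + 2) → ℝ) → (Fin n → ℝ) :=
    fun x (i : Fin n) => x (Fin.castLE (by omega) i) with hπdef
  have hπmeas : Measurable π := measurable_pi_lambda _ fun i => measurable_pi_apply _
  have hYmap : μ.map Y = Measure.pi (fun _ : Fin n => volume.restrict (Set.Icc (0:ℝ) 1)) := by
    have hYcomp : Y = π ∘ (fun ω (j : Fin (n + 2)) => X j ω) := rfl
    rw [hYcomp, ← Measure.map_map hπmeas hJmeas, hPmap, ← phi_map n,
      Measure.map_map hπmeas (measurable_phi n)]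
    have hcomp : (π ∘ phi n) = Prod.fst := funext fun p => funext fun i => phi_castLE n p i
    rw [hcomp, Measure.map_fst_prod]
    simp
  -- a.e. goodness
  have hgoodμ : ∀ᵐ ω ∂μ, ∀ i : Fin n, X (Fin.castLE (by omega : n ≤ n + 2) i) ω
      ∈ Set.Icc (0:ℝ) 1 := by
    rw [ae_all_iff]
    intro i
    apply ae_iff.mpr
    have h0 : μ (X (Fin.castLE (by omega : n ≤ n + 2) i) ⁻¹' (Set.Icc (0:ℝ) 1)ᶜ) = 0 := by
      rw [← Measure.map_apply (hmeas _) measurableSet_Icc.compl, hunif,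
        Measure.restrict_apply measurableSet_Icc.compl]
      simp
    exact h0
  have hgoodPi : ∀ᵐ v ∂(Measure.pi (fun _ : Fin n => volume.restrict (Set.Icc (0:ℝ) 1))),
      ∀ i, v i ∈ Set.Icc (0:ℝ) 1 := by
    have hset : MeasurableSet {v : Fin n → ℝ | ∀ i, v i ∈ Set.Icc (0:ℝ) 1} := by
      have he : {v : Fin n → ℝ | ∀ i, v i ∈ Set.Icc (0:ℝ) 1}
          = Set.pi Set.univ (fun _ : Fin n => Set.Icc (0:ℝ) 1) := by
        ext v
        simp only [Set.mem_univ_pi, Set.mem_Icc, Set.mem_setOf_eq]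
      rw [he]
      exact MeasurableSet.univ_pi fun _ => measurableSet_Icc
    rw [← hYmap, ae_map_iff hYmeas.aemeasurable hset]
    exact hgoodμ
  -- pointwise bounds on G
  have hGnn : ∀ v : Fin n → ℝ, (∀ i, v i ∈ Set.Icc (0:ℝ) 1) → 0 ≤ G v := by
    intro v hv
    rw [hGdef]
    apply add_nonneg
    · exact Finset.sum_nonneg fun ℓ hℓ => spacing_nonneg v hv
        (by rw [Finset.mem_range] at hℓ; omega)
    · exact mul_nonneg hγ0 (spacing_nonneg v hv hkn)
  have hGle1 : ∀ v : Fin n → ℝ, (∀ i, v i ∈ Set.Icc (0:ℝ) 1) → G v ≤ 1 := by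
    intro v hv
    have tele : ∑ ℓ ∈ Finset.range (n + 1), spacing n v ℓ = 1 := by
      have := Finset.sum_range_sub (fun m => ordStatExt n v m) (n + 1)
      rw [ordStat_top v (by omega), ordStat_zero] at this
      calc ∑ ℓ ∈ Finset.range (n + 1), spacing n v ℓ
          = ∑ ℓ ∈ Finset.range (n + 1), (ordStatExt n v (ℓ + 1) - ordStatExt n v ℓ) := rfl
        _ = 1 := by rw [this]; ring
    have h1 : G v ≤ ∑ ℓ ∈ Finset.range (⌊(n + 1 : ℝ) * t⌋₊ + 1), spacing n v ℓ := by
      simp only [hGdef, Finset.sum_range_succ]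
      have hsp := spacing_nonneg v hv hkn
      have hle : ((n + 1 : ℝ) * t - ⌊(n + 1 : ℝ) * t⌋₊) * spacing n v ⌊(n + 1 : ℝ) * t⌋₊
          ≤ spacing n v ⌊(n + 1 : ℝ) * t⌋₊ := by
        nlinarith [mul_nonneg (by linarith :
          (0:ℝ) ≤ 1 - ((n + 1 : ℝ) * t - ⌊(n + 1 : ℝ) * t⌋₊)) hsp]
      linarith
    refine le_trans h1 (le_trans (Finset.sum_le_sum_of_subset_of_nonneg
      (Finset.range_subset_range.mpr (by omega)) fun ℓ hℓ _ => spacing_nonneg v hv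
        (by rw [Finset.mem_range] at hℓ; omega)) tele.le)
  -- key identity
  have hkey : ∀ B : Set (Fin n → ℝ), MeasurableSet B →
      μ (A ∩ Y ⁻¹' B) = ∫⁻ v in B, ENNReal.ofReal (G v)
        ∂(Measure.pi (fun _ : Fin n => volume.restrict (Set.Icc (0:ℝ) 1))) := by
    intro B hB
    set A' : Set (Fin (n + 2) → ℝ) := {x | (((Finset.univ.filter (fun i : Fin n =>
        x (Fin.castLE (by omega) i) < x ⟨n, by omega⟩)).card : ℝ) +
        x ⟨n + 1, by omega⟩) / (n + 1) ≤ t} with hA'def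
    have hA'_meas : MeasurableSet A' := by
      rw [hA'def]
      have hcard : Measurable (fun x : Fin (n + 2) → ℝ => ((Finset.univ.filter (fun i : Fin n =>
          x (Fin.castLE (by omega) i) < x ⟨n, by omega⟩)).card : ℝ)) := by
        have he : (fun x : Fin (n + 2) → ℝ => ((Finset.univ.filter (fun i : Fin n =>
            x (Fin.castLE (by omega) i) < x ⟨n, by omega⟩)).card : ℝ))
            = fun x => ∑ i : Fin n, if x (Fin.castLE (by omega) i) < x ⟨n, by omega⟩
                then (1:ℝ) else 0 := by
          funext x
          rw [Finset.card_filter]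
          push_cast
          rfl
        rw [he]
        exact Finset.measurable_sum _ fun i _ => Measurable.ite
          (measurableSet_lt (measurable_pi_apply _) (measurable_pi_apply _))
          measurable_const measurable_const
      exact measurableSet_le ((hcard.add (measurable_pi_apply _)).div_const _) measurable_const
    have h1 : A ∩ Y ⁻¹' B = (fun ω (j : Fin (n + 2)) => X j ω) ⁻¹' (A' ∩ π ⁻¹' B) := rfl
    rw [h1, ← Measure.map_apply hJmeas (hA'_meas.inter (hπmeas hB)), hPmap, ← phi_map n,
      Measure.map_apply (measurable_phi n) (hA'_meas.inter (hπmeas hB))]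
    have h2 : phi n ⁻¹' (A' ∩ π ⁻¹' B)
        = {p : (Fin n → ℝ) × ℝ × ℝ | (((Finset.univ.filter (fun i : Fin n =>
            p.1 i < p.2.1)).card : ℝ) + p.2.2) / (n + 1) ≤ t ∧ p.1 ∈ B} := by
      ext p
      simp only [Set.mem_preimage, Set.mem_inter_iff, Set.mem_setOf_eq, hA'def, hπdef,
        phi_castLE, phi_mid, phi_top]
    have hS2meas : MeasurableSet {p : (Fin n → ℝ) × ℝ × ℝ | (((Finset.univ.filter
        (fun i : Fin n => p.1 i < p.2.1)).card : ℝ) + p.2.2) / (n + 1) ≤ t ∧ p.1 ∈ B} := by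
      rw [← h2]
      exact (measurable_phi n) (hA'_meas.inter (hπmeas hB))
    rw [h2, Measure.prod_apply hS2meas]
    have h3 : (fun v => ((volume.restrict (Set.Icc (0:ℝ) 1)).prod
          (volume.restrict (Set.Icc (0:ℝ) 1)))
          (Prod.mk v ⁻¹' {p : (Fin n → ℝ) × ℝ × ℝ | (((Finset.univ.filter
            (fun i : Fin n => p.1 i < p.2.1)).card : ℝ) + p.2.2) / (n + 1) ≤ t ∧ p.1 ∈ B}))
        = B.indicator (fun v => ((volume.restrict (Set.Icc (0:ℝ) 1)).prod
            (volume.restrict (Set.Icc (0:ℝ) 1)))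
            {q : ℝ × ℝ | (((Finset.univ.filter (fun i : Fin n => v i < q.1)).card : ℝ) + q.2)
              / (n + 1) ≤ t}) := by
      funext v
      by_cases hv : v ∈ B
      · rw [Set.indicator_of_mem hv]
        congr 1
        ext q
        simp [hv]
      · rw [Set.indicator_of_notMem hv]
        have hemp : Prod.mk v ⁻¹' {p : (Fin n → ℝ) × ℝ × ℝ | (((Finset.univ.filter
            (fun i : Fin n => p.1 i < p.2.1)).card : ℝ) + p.2.2) / (n + 1) ≤ t ∧ p.1 ∈ B}
            = (∅ : Set (ℝ × ℝ)) := by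
          ext q
          simp [hv]
        rw [hemp]
        exact measure_empty
    rw [h3, lintegral_indicator hB]
    apply lintegral_congr_ae
    filter_upwards [ae_restrict_of_ae hgoodPi] with v hv
    exact core_integral n t ht v hv
  -- integrability
  have hg_int : Integrable (fun ω => G (Y ω)) μ := by
    refine Integrable.mono' (integrable_const (1:ℝ))
      ((hGmeas.comp hYmeas).aestronglyMeasurable) ?_
    filter_upwards [hgoodμ] with ω hω
    rw [Real.norm_eq_abs, abs_le]
    constructor
    · linarith [hGnn (Y ω) hω]
    · linarith [hGle1 (Y ω) hω]
  have hf_int : Integrable (Set.indicator A (fun _ => (1:ℝ))) μ :=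
    (integrable_const (1:ℝ)).indicator hA_meas
  have hY' : Measurable[MeasurableSpace.comap Y inferInstance] Y :=
    Measurable.of_comap_le le_rfl
  have hgm : AEStronglyMeasurable[MeasurableSpace.comap Y inferInstance]
      (fun ω => G (Y ω)) μ :=
    StronglyMeasurable.aestronglyMeasurable (hGmeas.comp hY').stronglyMeasurable
  haveI : SigmaFinite (μ.trim hm') := inferInstance
  have main : (fun ω => G (Y ω)) =ᵐ[μ]
      μ[Set.indicator A (fun _ => (1:ℝ)) | MeasurableSpace.comap Y inferInstance] := by
    refine ae_eq_condExp_of_forall_setIntegral_eq hm' hf_int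
      (fun s _ _ => hg_int.integrableOn) (fun s hs hμs => ?_) hgm
    obtain ⟨B, hB, rfl⟩ := hs
    have hnn : 0 ≤ᵐ[(Measure.pi (fun _ : Fin n =>
        volume.restrict (Set.Icc (0:ℝ) 1))).restrict B] G :=
      ae_restrict_of_ae (hgoodPi.mono fun v hv => hGnn v hv)
    calc ∫ x in Y ⁻¹' B, G (Y x) ∂μ
        = ∫ v in B, G v ∂(μ.map Y) :=
          (setIntegral_map hB hGmeas.aestronglyMeasurable hYmeas.aemeasurable).symm
      _ = (∫⁻ v in B, ENNReal.ofReal (G v)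
            ∂(Measure.pi (fun _ : Fin n => volume.restrict (Set.Icc (0:ℝ) 1)))).toReal := by
          rw [hYmap]
          exact integral_eq_lintegral_of_nonneg_ae hnn hGmeas.aestronglyMeasurable.restrict
      _ = (μ (A ∩ Y ⁻¹' B)).toReal := by rw [hkey B hB]
      _ = ∫ x in Y ⁻¹' B, Set.indicator A (fun _ => (1:ℝ)) x ∂μ := by
          rw [show Set.indicator A (fun _ => (1:ℝ)) = Set.indicator A (1 : Ω → ℝ) from rfl,
            integral_indicator_one hA_meas, Measure.real_def, Measure.restrict_apply hA_meas]
  filter_upwards [main] with ω hω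
  exact hω.symm
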